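/- Let Ω and Ω̃ be open subsets of ℂ, let ρ : Ω̃ → (0,∞) be C², and let f : Ω → Ω̃ be a smooth orientation-preserving diffeomorphism of Ω onto Ω̃ that is harmonic with respect to ρ. Suppose f has constant distortion and is not conformal; that is, there is a constant k with 0 < k < 1 such that |μ_f(z)| = k for all z ∈ Ω. Then log ρ is harmonic on Ω̃, i.e. the metric ρ(w)|dw| is flat. -/

import Mathlib

noncomputable section

open Complex Set Topology

/-- Wirtinger derivative `∂f/∂z` of a map `f : ℂ → ℂ`, viewed as a map of `ℝ² = ℂ`. -/
def wdz (f : ℂ → ℂ) (z : ℂ) : ℂ :=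
  (1 / 2 : ℂ) * (fderiv ℝ f z 1 - Complex.I * fderiv ℝ f z Complex.I)

/-- Wirtinger derivative `∂f/∂z̄` of a map `f : ℂ → ℂ`. -/
def wdzbar (f : ℂ → ℂ) (z : ℂ) : ℂ :=
  (1 / 2 : ℂ) * (fderiv ℝ f z 1 + Complex.I * fderiv ℝ f z Complex.I)

lemma clm_apply_wirt (L : ℂ →L[ℝ] ℂ) (v : ℂ) :
    L v = (1/2 : ℂ) * (L 1 - Complex.I * L Complex.I) * v
        + (1/2 : ℂ) * (L 1 + Complex.I * L Complex.I) * (starRingEnd ℂ) v := by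
  have hv : v = (v.re : ℝ) • (1 : ℂ) + (v.im : ℝ) • (Complex.I) := by
    simp [Complex.real_smul]
  have h1 : L v = (v.re : ℂ) * L 1 + (v.im : ℂ) * L Complex.I := by
    rw [hv, map_add, map_smul, map_smul]
    simp [Complex.real_smul, smul_eq_mul]
  have hc : (starRingEnd ℂ) v = (v.re : ℂ) - (v.im : ℂ) * Complex.I := by
    rw [Complex.ext_iff]; simp
  have hv' : v = (v.re : ℂ) + (v.im : ℂ) * Complex.I := (Complex.re_add_im v).symm
  rw [h1, hc]
  nth_rewrite 3 [hv']
  linear_combination ((v.im : ℂ) * L Complex.I) * Complex.I_sq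

lemma fderiv_wirt (h : ℂ → ℂ) (z v : ℂ) :
    fderiv ℝ h z v = wdz h z * v + wdzbar h z * (starRingEnd ℂ) v := by
  simpa [wdz, wdzbar, mul_comm] using clm_apply_wirt (fderiv ℝ h z) v

lemma wdz_comp (h f : ℂ → ℂ) (z : ℂ) (hf : DifferentiableAt ℝ f z)
    (hh : DifferentiableAt ℝ h (f z)) :
    wdz (fun w => h (f w)) z
      = wdz h (f z) * wdz f z + wdzbar h (f z) * (starRingEnd ℂ) (wdzbar f z) := by
  have hcomp : fderiv ℝ (h ∘ f) z = (fderiv ℝ h (f z)).comp (fderiv ℝ f z) :=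
    fderiv_comp z hh hf
  have h1 : fderiv ℝ (fun w => h (f w)) z 1 = fderiv ℝ h (f z) (fderiv ℝ f z 1) := by
    rw [show (fun w => h (f w)) = h ∘ f from rfl, hcomp]; rfl
  have h2 : fderiv ℝ (fun w => h (f w)) z Complex.I
      = fderiv ℝ h (f z) (fderiv ℝ f z Complex.I) := by
    rw [show (fun w => h (f w)) = h ∘ f from rfl, hcomp]; rfl
  conv_lhs => rw [wdz]
  rw [h1, h2, fderiv_wirt h (f z), fderiv_wirt h (f z)]
  simp only [wdz, wdzbar, map_mul, map_add, map_sub, map_div₀, map_one, map_ofNat, Complex.conj_I]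
  ring

lemma wdzbar_comp (h f : ℂ → ℂ) (z : ℂ) (hf : DifferentiableAt ℝ f z)
    (hh : DifferentiableAt ℝ h (f z)) :
    wdzbar (fun w => h (f w)) z
      = wdz h (f z) * wdzbar f z + wdzbar h (f z) * (starRingEnd ℂ) (wdz f z) := by
  have hcomp : fderiv ℝ (h ∘ f) z = (fderiv ℝ h (f z)).comp (fderiv ℝ f z) :=
    fderiv_comp z hh hf
  have h1 : fderiv ℝ (fun w => h (f w)) z 1 = fderiv ℝ h (f z) (fderiv ℝ f z 1) := by
    rw [show (fun w => h (f w)) = h ∘ f from rfl, hcomp]; rfl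
  have h2 : fderiv ℝ (fun w => h (f w)) z Complex.I
      = fderiv ℝ h (f z) (fderiv ℝ f z Complex.I) := by
    rw [show (fun w => h (f w)) = h ∘ f from rfl, hcomp]; rfl
  conv_lhs => rw [wdzbar]
  rw [h1, h2, fderiv_wirt h (f z), fderiv_wirt h (f z)]
  simp only [wdz, wdzbar, map_mul, map_add, map_sub, map_div₀, map_one, map_ofNat, Complex.conj_I]
  ring

lemma wdz_conj (h : ℂ → ℂ) (z : ℂ) (hh : DifferentiableAt ℝ h z) :
    wdz (fun w => (starRingEnd ℂ) (h w)) z = (starRingEnd ℂ) (wdzbar h z) := by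
  have hc : DifferentiableAt ℝ (fun x : ℂ => (starRingEnd ℂ) x) (h z) :=
    Complex.conjCLE.differentiableAt
  have := wdz_comp (fun x : ℂ => (starRingEnd ℂ) x) h z hh hc
  have e1 : wdz (fun x : ℂ => (starRingEnd ℂ) x) (h z) = 0 := by
    have hfd : fderiv ℝ (fun x : ℂ => (starRingEnd ℂ) x) (h z)
        = Complex.conjCLE.toContinuousLinearMap := by
      exact (Complex.conjCLE.toContinuousLinearMap.hasFDerivAt (x := h z)).fderiv
    simp [wdz, hfd, Complex.ext_iff]
  have e2 : wdzbar (fun x : ℂ => (starRingEnd ℂ) x) (h z) = 1 := by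
    have hfd : fderiv ℝ (fun x : ℂ => (starRingEnd ℂ) x) (h z)
        = Complex.conjCLE.toContinuousLinearMap := by
      exact (Complex.conjCLE.toContinuousLinearMap.hasFDerivAt (x := h z)).fderiv
    simp [wdzbar, hfd, Complex.ext_iff]; norm_num
  rw [this, e1, e2]; ring

lemma wdzbar_conj (h : ℂ → ℂ) (z : ℂ) (hh : DifferentiableAt ℝ h z) :
    wdzbar (fun w => (starRingEnd ℂ) (h w)) z = (starRingEnd ℂ) (wdz h z) := by
  have hc : DifferentiableAt ℝ (fun x : ℂ => (starRingEnd ℂ) x) (h z) :=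
    Complex.conjCLE.differentiableAt
  have := wdzbar_comp (fun x : ℂ => (starRingEnd ℂ) x) h z hh hc
  have hfd : fderiv ℝ (fun x : ℂ => (starRingEnd ℂ) x) (h z)
      = Complex.conjCLE.toContinuousLinearMap :=
    (Complex.conjCLE.toContinuousLinearMap.hasFDerivAt (x := h z)).fderiv
  have e1 : wdz (fun x : ℂ => (starRingEnd ℂ) x) (h z) = 0 := by
    simp [wdz, hfd, Complex.ext_iff]
  have e2 : wdzbar (fun x : ℂ => (starRingEnd ℂ) x) (h z) = 1 := by
    simp [wdzbar, hfd, Complex.ext_iff]; norm_num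
  rw [this, e1, e2]; ring

lemma wdz_mul (a b : ℂ → ℂ) (z : ℂ) (ha : DifferentiableAt ℝ a z)
    (hb : DifferentiableAt ℝ b z) :
    wdz (fun w => a w * b w) z = wdz a z * b z + a z * wdz b z := by
  simp only [wdz, fderiv_fun_mul ha hb, ContinuousLinearMap.add_apply,
    ContinuousLinearMap.smul_apply, smul_eq_mul]
  ring

lemma wdzbar_mul (a b : ℂ → ℂ) (z : ℂ) (ha : DifferentiableAt ℝ a z)
    (hb : DifferentiableAt ℝ b z) :
    wdzbar (fun w => a w * b w) z = wdzbar a z * b z + a z * wdzbar b z := by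
  simp only [wdzbar, fderiv_fun_mul ha hb, ContinuousLinearMap.add_apply,
    ContinuousLinearMap.smul_apply, smul_eq_mul]
  ring

lemma wdz_congr {h₁ h₂ : ℂ → ℂ} {z : ℂ} (h : h₁ =ᶠ[nhds z] h₂) :
    wdz h₁ z = wdz h₂ z := by
  simp only [wdz, h.fderiv_eq]

lemma wdzbar_congr {h₁ h₂ : ℂ → ℂ} {z : ℂ} (h : h₁ =ᶠ[nhds z] h₂) :
    wdzbar h₁ z = wdzbar h₂ z := by
  simp only [wdzbar, h.fderiv_eq]

lemma wdz_neg (a : ℂ → ℂ) (z : ℂ) : wdz (fun w => -(a w)) z = - wdz a z := by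
  simp only [wdz, fderiv_fun_neg, ContinuousLinearMap.neg_apply]; ring

section snd

variable (h : ℂ → ℂ) (z : ℂ)

lemma diff_fderiv_apply (hh : ContDiffAt ℝ 2 h z) (v : ℂ) :
    DifferentiableAt ℝ (fun w => fderiv ℝ h w v) z := by
  have hfd : DifferentiableAt ℝ (fderiv ℝ h) z :=
    (hh.fderiv_right (m := 1) (by norm_num)).differentiableAt (by norm_num)
  exact (ContinuousLinearMap.apply ℝ ℂ v).differentiableAt.comp z hfd

lemma fderiv_fderiv_apply (hh : ContDiffAt ℝ 2 h z) (u v : ℂ) :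
    fderiv ℝ (fun w => fderiv ℝ h w u) z v = fderiv ℝ (fderiv ℝ h) z v u := by
  have hfd : DifferentiableAt ℝ (fderiv ℝ h) z :=
    (hh.fderiv_right (m := 1) (by norm_num)).differentiableAt (by norm_num)
  rw [fderiv_clm_apply hfd (differentiableAt_const u)]
  simp

lemma fderiv_wdz_apply (hh : ContDiffAt ℝ 2 h z) (v : ℂ) :
    fderiv ℝ (wdz h) z v
      = (1/2 : ℂ) * fderiv ℝ (fun w => fderiv ℝ h w 1) z v
        - (Complex.I/2) * fderiv ℝ (fun w => fderiv ℝ h w Complex.I) z v := by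
  have d1 := diff_fderiv_apply h z hh 1
  have dI := diff_fderiv_apply h z hh Complex.I
  have h1 : HasFDerivAt (fun w => fderiv ℝ h w (1:ℂ))
      (fderiv ℝ (fun w => fderiv ℝ h w (1:ℂ)) z) z := d1.hasFDerivAt
  have h2 : HasFDerivAt (fun w => fderiv ℝ h w Complex.I)
      (fderiv ℝ (fun w => fderiv ℝ h w Complex.I) z) z := dI.hasFDerivAt
  have hw : HasFDerivAt (wdz h)
      ((1/2 : ℂ) • fderiv ℝ (fun w => fderiv ℝ h w (1:ℂ)) z
        - (Complex.I/2) • fderiv ℝ (fun w => fderiv ℝ h w Complex.I) z) z := by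
    have hthis := (h1.const_smul ((1:ℂ)/2)).sub (h2.const_smul (Complex.I/2))
    have hfun : wdz h = fun w => ((1:ℂ)/2) • (fderiv ℝ h w) 1
        - (Complex.I/2) • (fderiv ℝ h w) Complex.I := by
      funext w; simp only [wdz, smul_eq_mul]; ring
    rw [hfun]; exact hthis
  rw [hw.fderiv]
  simp [smul_eq_mul]

lemma fderiv_wdzbar_apply (hh : ContDiffAt ℝ 2 h z) (v : ℂ) :
    fderiv ℝ (wdzbar h) z v
      = (1/2 : ℂ) * fderiv ℝ (fun w => fderiv ℝ h w 1) z v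
        + (Complex.I/2) * fderiv ℝ (fun w => fderiv ℝ h w Complex.I) z v := by
  have d1 := diff_fderiv_apply h z hh 1
  have dI := diff_fderiv_apply h z hh Complex.I
  have h1 : HasFDerivAt (fun w => fderiv ℝ h w (1:ℂ))
      (fderiv ℝ (fun w => fderiv ℝ h w (1:ℂ)) z) z := d1.hasFDerivAt
  have h2 : HasFDerivAt (fun w => fderiv ℝ h w Complex.I)
      (fderiv ℝ (fun w => fderiv ℝ h w Complex.I) z) z := dI.hasFDerivAt
  have hw : HasFDerivAt (wdzbar h)
      ((1/2 : ℂ) • fderiv ℝ (fun w => fderiv ℝ h w (1:ℂ)) z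
        + (Complex.I/2) • fderiv ℝ (fun w => fderiv ℝ h w Complex.I) z) z := by
    have hthis := (h1.const_smul ((1:ℂ)/2)).add (h2.const_smul (Complex.I/2))
    have hfun : wdzbar h = fun w => ((1:ℂ)/2) • (fderiv ℝ h w) 1
        + (Complex.I/2) • (fderiv ℝ h w) Complex.I := by
      funext w; simp only [wdzbar, smul_eq_mul]; ring
    rw [hfun]; exact hthis
  rw [hw.fderiv]
  simp [smul_eq_mul]

lemma schwarz_wirt (hh : ContDiffAt ℝ 2 h z) :
    wdz (wdzbar h) z = wdzbar (wdz h) z := by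
  have hsymm := (hh.isSymmSndFDerivAt (by norm_num)).eq 1 Complex.I
  have hT : fderiv ℝ (fun w => fderiv ℝ h w (1:ℂ)) z Complex.I
      = fderiv ℝ (fun w => fderiv ℝ h w Complex.I) z 1 := by
    rw [fderiv_fderiv_apply h z hh, fderiv_fderiv_apply h z hh]
    exact hsymm.symm
  simp only [wdz, wdzbar, fderiv_wdz_apply h z hh, fderiv_wdzbar_apply h z hh, hT]
  ring

end snd

lemma diff_fderiv_apply' {F : Type*} [NormedAddCommGroup F] [NormedSpace ℝ F]
    (h : ℂ → F) (z : ℂ) (hh : ContDiffAt ℝ 2 h z) (v : ℂ) :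
    DifferentiableAt ℝ (fun w => fderiv ℝ h w v) z := by
  have hfd : DifferentiableAt ℝ (fderiv ℝ h) z :=
    (hh.fderiv_right (m := 1) (by norm_num)).differentiableAt (by norm_num)
  exact (ContinuousLinearMap.apply ℝ F v).differentiableAt.comp z hfd

lemma contDiffOn_wdz {f : ℂ → ℂ} {Ω : Set ℂ} (hΩ : IsOpen Ω) {n m : WithTop ℕ∞}
    (hf : ContDiffOn ℝ n f Ω) (hmn : m + 1 ≤ n) : ContDiffOn ℝ m (wdz f) Ω := by
  have hfd := hf.fderiv_of_isOpen hΩ hmn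
  have h1 : ContDiffOn ℝ m (fun z => fderiv ℝ f z 1) Ω := hfd.clm_apply contDiffOn_const
  have h2 : ContDiffOn ℝ m (fun z => fderiv ℝ f z Complex.I) Ω := hfd.clm_apply contDiffOn_const
  have : ContDiffOn ℝ m
      (fun z => (1/2 : ℂ) * (fderiv ℝ f z 1 - Complex.I * fderiv ℝ f z Complex.I)) Ω :=
    contDiffOn_const.mul (h1.sub (contDiffOn_const.mul h2))
  exact this

lemma contDiffOn_wdzbar {f : ℂ → ℂ} {Ω : Set ℂ} (hΩ : IsOpen Ω) {n m : WithTop ℕ∞}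
    (hf : ContDiffOn ℝ n f Ω) (hmn : m + 1 ≤ n) : ContDiffOn ℝ m (wdzbar f) Ω := by
  have hfd := hf.fderiv_of_isOpen hΩ hmn
  have h1 : ContDiffOn ℝ m (fun z => fderiv ℝ f z 1) Ω := hfd.clm_apply contDiffOn_const
  have h2 : ContDiffOn ℝ m (fun z => fderiv ℝ f z Complex.I) Ω := hfd.clm_apply contDiffOn_const
  have : ContDiffOn ℝ m
      (fun z => (1/2 : ℂ) * (fderiv ℝ f z 1 + Complex.I * fderiv ℝ f z Complex.I)) Ω :=
    contDiffOn_const.mul (h1.add (contDiffOn_const.mul h2))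
  exact this

lemma lap_link {u : ℂ → ℝ} {Ω' : Set ℂ} (hΩ' : IsOpen Ω') {z : ℂ} (hz : z ∈ Ω')
    (hu : ContDiffOn ℝ 2 u Ω') :
    wdzbar (wdz (fun w => ((u w : ℂ)))) z
      + (starRingEnd ℂ) (wdzbar (wdz (fun w => ((u w : ℂ)))) z)
    = ((fderiv ℝ (fun w => fderiv ℝ u w 1) z 1
        + fderiv ℝ (fun w => fderiv ℝ u w Complex.I) z Complex.I : ℝ) : ℂ) / 2 := by
  set uc : ℂ → ℂ := fun w => ((u w : ℂ)) with huc
  have hucd : ContDiffOn ℝ 2 uc Ω' := Complex.ofRealCLM.contDiff.comp_contDiffOn hu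
  have hucz : ContDiffAt ℝ 2 uc z := (hucd z hz).contDiffAt (hΩ'.mem_nhds hz)
  have huz : ContDiffAt ℝ 2 u z := (hu z hz).contDiffAt (hΩ'.mem_nhds hz)
  -- fderiv of uc in terms of fderiv of u, near z
  have hev : ∀ v : ℂ, (fun w => fderiv ℝ uc w v) =ᶠ[nhds z]
      (fun w => ((fderiv ℝ u w v : ℝ) : ℂ)) := by
    intro v
    have : ∀ᶠ w in nhds z, DifferentiableAt ℝ u w := by
      filter_upwards [hΩ'.mem_nhds hz] with w hw
      exact (hu.differentiableOn (by norm_num) w hw).differentiableAt (hΩ'.mem_nhds hw)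
    filter_upwards [this] with w hw
    have : fderiv ℝ uc w = Complex.ofRealCLM.comp (fderiv ℝ u w) :=
      (Complex.ofRealCLM.hasFDerivAt.comp w hw.hasFDerivAt).fderiv
    rw [this]; rfl
  have key : ∀ v v' : ℂ, fderiv ℝ (fun w => fderiv ℝ uc w v) z v'
      = ((fderiv ℝ (fun w => fderiv ℝ u w v) z v' : ℝ) : ℂ) := by
    intro v v'
    rw [(hev v).fderiv_eq]
    have hd : DifferentiableAt ℝ (fun w => fderiv ℝ u w v) z :=
      diff_fderiv_apply' u z huz v
    have : fderiv ℝ (fun w => ((fderiv ℝ u w v : ℝ) : ℂ)) z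
        = Complex.ofRealCLM.comp (fderiv ℝ (fun w => fderiv ℝ u w v) z) :=
      (Complex.ofRealCLM.hasFDerivAt.comp z hd.hasFDerivAt).fderiv
    rw [this]; rfl
  rw [wdzbar, fderiv_wdz_apply uc z hucz, fderiv_wdz_apply uc z hucz,
    key 1 1, key 1 Complex.I, key Complex.I 1, key Complex.I Complex.I]
  simp only [map_add, map_sub, map_mul, map_div₀, map_one, map_ofNat, Complex.conj_I,
    Complex.conj_ofReal, Complex.ofReal_add]
  ring_nf
  rw [Complex.I_sq]
  ring

lemma wdzbar_neg (a : ℂ → ℂ) (z : ℂ) : wdzbar (fun w => -(a w)) z = - wdzbar a z := by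
  simp only [wdzbar, fderiv_fun_neg, ContinuousLinearMap.neg_apply]; ring

lemma wdzbar_add (a b : ℂ → ℂ) (z : ℂ) (ha : DifferentiableAt ℝ a z)
    (hb : DifferentiableAt ℝ b z) :
    wdzbar (fun w => a w + b w) z = wdzbar a z + wdzbar b z := by
  simp only [wdzbar, fderiv_fun_add ha hb, ContinuousLinearMap.add_apply]; ring

lemma wdz_const_mul (c : ℂ) (a : ℂ → ℂ) (z : ℂ) (ha : DifferentiableAt ℝ a z) :
    wdz (fun w => c * a w) z = c * wdz a z := by
  rw [wdz_mul (fun _ => c) a z (differentiableAt_const c) ha]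
  have : wdz (fun _ => c) z = 0 := by simp [wdz, fderiv_const]
  rw [this]; ring

lemma wdzbar_const_mul (c : ℂ) (a : ℂ → ℂ) (z : ℂ) (ha : DifferentiableAt ℝ a z) :
    wdzbar (fun w => c * a w) z = c * wdzbar a z := by
  rw [wdzbar_mul (fun _ => c) a z (differentiableAt_const c) ha]
  have : wdzbar (fun _ => c) z = 0 := by simp [wdzbar, fderiv_const]
  rw [this]; ring

lemma wdz_diffAt {h : ℂ → ℂ} {z : ℂ} (hh : ContDiffAt ℝ 2 h z) :
    DifferentiableAt ℝ (wdz h) z := by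
  have d1 := diff_fderiv_apply h z hh 1
  have dI := diff_fderiv_apply h z hh Complex.I
  have : DifferentiableAt ℝ
      (fun w => (1/2 : ℂ) * (fderiv ℝ h w 1 - Complex.I * fderiv ℝ h w Complex.I)) z :=
    (differentiableAt_const _).mul (d1.sub ((differentiableAt_const _).mul dI))
  exact this

lemma wdzbar_diffAt {h : ℂ → ℂ} {z : ℂ} (hh : ContDiffAt ℝ 2 h z) :
    DifferentiableAt ℝ (wdzbar h) z := by
  have d1 := diff_fderiv_apply h z hh 1
  have dI := diff_fderiv_apply h z hh Complex.I
  have : DifferentiableAt ℝ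
      (fun w => (1/2 : ℂ) * (fderiv ℝ h w 1 + Complex.I * fderiv ℝ h w Complex.I)) z :=
    (differentiableAt_const _).mul (d1.add ((differentiableAt_const _).mul dI))
  exact this

lemma key_poly (p pb q qb s sb a ab b bb m mb t tb : ℂ) (k : ℝ)
    (hp : p ≠ 0) (hpb : pb ≠ 0) (hq : q ≠ 0) (hqb : qb ≠ 0)
    (hk : (k:ℂ) ≠ 0) (hk2 : (k:ℂ)^2 ≠ 1)
    (h1 : q*qb = (k:ℂ)^2*(p*pb))
    (h2 : -(s*p*q)*qb + q*tb = (k:ℂ)^2*(m*pb + p*(-(sb*pb*qb))))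
    (h2' : -(sb*pb*qb)*q + qb*t = (k:ℂ)^2*(mb*p + pb*(-(s*p*q))))
    (h3 : (-((a*q + b*pb)*p*q - s*(s*p*q)*q + s*p*t))*qb
          + (s*p*q)*(sb*pb*qb) + t*tb
          + q*(-((ab*qb + bb*p)*pb*qb - sb*(sb*pb*qb)*qb + sb*pb*tb))
        = (k:ℂ)^2*((-((a*p + b*qb)*p*q + s*m*q - s*p*(s*p*q)))*pb + m*mb
          + (s*p*q)*(sb*pb*qb)
          + p*(-((ab*pb + bb*q)*pb*qb + sb*mb*qb - sb*pb*(sb*pb*qb))))) :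
    b + bb = 0 := by
  have hb : (b + bb) * ((k:ℂ)^4 * (1 - (k:ℂ)^2) * p^3 * pb^3) = 0 := by
    linear_combination (-(q*qb)) * h3 + (qb*t - pb*q*qb*sb) * h2
      + (pb*m*(k:ℂ)^2 - p*pb*qb*sb*(k:ℂ)^2) * h2'
      + (-(m*mb)*(k:ℂ)^2 + pb*q*s*m*(k:ℂ)^2 - pb*q*qb^2*ab + pb*q*qb^2*sb^2
        + p*qb*sb*mb*(k:ℂ)^2 - p*q^2*qb*a + p*q^2*qb*s^2
        - p*pb*q*qb*bb + p*pb*q*qb*bb*(k:ℂ)^2 - p*pb*q*qb*b + p*pb*q*qb*b*(k:ℂ)^2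
        - p*pb*q*qb*s*sb*(k:ℂ)^2
        - p^2*pb^2*bb*(k:ℂ)^2 + p^2*pb^2*bb*(k:ℂ)^4
        - p^2*pb^2*b*(k:ℂ)^2 + p^2*pb^2*b*(k:ℂ)^4) * h1
  have hC : ((k:ℂ)^4 * (1 - (k:ℂ)^2) * p^3 * pb^3) ≠ 0 := by
    apply mul_ne_zero (mul_ne_zero (mul_ne_zero (pow_ne_zero _ hk)
      (sub_ne_zero_of_ne (Ne.symm hk2))) (pow_ne_zero _ hp)) (pow_ne_zero _ hpb)
  exact (mul_eq_zero.mp hb).resolve_right hC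


/-- The Wirtinger derivative `(log ρ)_w` of the logarithm of a positive function `ρ`. -/
def wlog (ρ : ℂ → ℝ) (w : ℂ) : ℂ :=
  wdz (fun u => (Real.log (ρ u) : ℂ)) w

/-- A real valued function is harmonic on a set if its Laplacian `u_xx + u_yy` vanishes there. -/
def IsHarmonicOn (u : ℂ → ℝ) (s : Set ℂ) : Prop :=
  ∀ z ∈ s,
    fderiv ℝ (fun w => fderiv ℝ u w 1) z 1 +
      fderiv ℝ (fun w => fderiv ℝ u w Complex.I) z Complex.I = 0

/-- `f` is harmonic on `Ω` with respect to the conformal metric `ρ(w)|dw|`: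
the tension equation `f_zz̄ + (log ρ)_w(f) f_z f_z̄ = 0` holds on `Ω`. -/
def IsRhoHarmonicOn (f : ℂ → ℂ) (ρ : ℂ → ℝ) (Ω : Set ℂ) : Prop :=
  ∀ z ∈ Ω, wdz (wdzbar f) z + wlog ρ (f z) * wdz f z * wdzbar f z = 0

lemma wdz_mul3 (A B C : ℂ → ℂ) (z : ℂ) (hA : DifferentiableAt ℝ A z)
    (hB : DifferentiableAt ℝ B z) (hC : DifferentiableAt ℝ C z) :
    wdz (fun w => A w * B w * C w) z
      = wdz A z * B z * C z + A z * wdz B z * C z + A z * B z * wdz C z := by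
  rw [wdz_mul (fun w => A w * B w) C z (hA.mul hB) hC, wdz_mul A B z hA hB]; ring

lemma wdzbar_mul3 (A B C : ℂ → ℂ) (z : ℂ) (hA : DifferentiableAt ℝ A z)
    (hB : DifferentiableAt ℝ B z) (hC : DifferentiableAt ℝ C z) :
    wdzbar (fun w => A w * B w * C w) z
      = wdzbar A z * B z * C z + A z * wdzbar B z * C z + A z * B z * wdzbar C z := by
  rw [wdzbar_mul (fun w => A w * B w) C z (hA.mul hB) hC, wdzbar_mul A B z hA hB]; ring


/-- a non-conformal harmonic diffeomorphism of constant distortion forces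
the target metric to be flat. -/
theorem flat_of_constant_distortion
    (Ω Ω' : Set ℂ) (hΩ : IsOpen Ω) (hΩ' : IsOpen Ω')
    (ρ : ℂ → ℝ) (hρpos : ∀ w ∈ Ω', 0 < ρ w) (hρ : ContDiffOn ℝ 2 ρ Ω')
    (f g : ℂ → ℂ)
    (hf : ContDiffOn ℝ (⊤ : ℕ∞) f Ω) (hfmaps : Set.MapsTo f Ω Ω')
    (himage : f '' Ω = Ω')
    (hg : ContDiffOn ℝ (⊤ : ℕ∞) g Ω') (hgmaps : Set.MapsTo g Ω' Ω)
    (hinv1 : ∀ w ∈ Ω', f (g w) = w) (hinv2 : ∀ z ∈ Ω, g (f z) = z)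
    (hOP : ∀ z ∈ Ω, ‖wdzbar f z‖ < ‖wdz f z‖)
    (hharm : IsRhoHarmonicOn f ρ Ω)
    (k : ℝ) (hk0 : 0 < k) (hk1 : k < 1)
    (hconst : ∀ z ∈ Ω, ‖wdzbar f z / wdz f z‖ = k) :
    IsHarmonicOn (fun w => Real.log (ρ w)) Ω' := by
  intro w0 hw0
  obtain ⟨z0, hz0, hfz0⟩ : ∃ z0 ∈ Ω, f z0 = w0 := by
    rw [← himage] at hw0; obtain ⟨z0, hz0, h⟩ := hw0; exact ⟨z0, hz0, h⟩
  classical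
  set G : ℂ → ℂ := wlog ρ with hGdef
  set p : ℂ → ℂ := wdz f with hpdef
  set q : ℂ → ℂ := wdzbar f with hqdef
  have hmem : Ω ∈ nhds z0 := hΩ.mem_nhds hz0
  -- smoothness of f side
  have hf3 : ContDiffOn ℝ 3 f Ω := hf.of_le (by exact WithTop.coe_le_coe.mpr le_top)
  have hp2 : ContDiffOn ℝ 2 p Ω := contDiffOn_wdz hΩ hf3 (by norm_num)
  have hq2 : ContDiffOn ℝ 2 q Ω := contDiffOn_wdzbar hΩ hf3 (by norm_num)
  have hfC : ∀ z ∈ Ω, ContDiffAt ℝ 2 f z :=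
    fun z hz => ((hf.of_le (by exact WithTop.coe_le_coe.mpr le_top) : ContDiffOn ℝ 2 f Ω) z hz).contDiffAt (hΩ.mem_nhds hz)
  have hpC : ∀ z ∈ Ω, ContDiffAt ℝ 2 p z := fun z hz => (hp2 z hz).contDiffAt (hΩ.mem_nhds hz)
  have hqC : ∀ z ∈ Ω, ContDiffAt ℝ 2 q z := fun z hz => (hq2 z hz).contDiffAt (hΩ.mem_nhds hz)
  have hdf : ∀ z ∈ Ω, DifferentiableAt ℝ f z := fun z hz => (hfC z hz).differentiableAt (by norm_num)
  have hdp : ∀ z ∈ Ω, DifferentiableAt ℝ p z := fun z hz => (hpC z hz).differentiableAt (by norm_num)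
  have hdq : ∀ z ∈ Ω, DifferentiableAt ℝ q z := fun z hz => (hqC z hz).differentiableAt (by norm_num)
  have hdqb : ∀ z ∈ Ω, DifferentiableAt ℝ (wdzbar q) z := fun z hz => wdzbar_diffAt (hqC z hz)
  have hdpb : ∀ z ∈ Ω, DifferentiableAt ℝ (wdzbar p) z := fun z hz => wdzbar_diffAt (hpC z hz)
  have hdpz : ∀ z ∈ Ω, DifferentiableAt ℝ (wdz p) z := fun z hz => wdz_diffAt (hpC z hz)
  have hdqz : ∀ z ∈ Ω, DifferentiableAt ℝ (wdz q) z := fun z hz => wdz_diffAt (hqC z hz)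
  -- smoothness of rho side
  have hσ : ContDiffOn ℝ 2 (fun w => Real.log (ρ w)) Ω' :=
    hρ.log (fun w hw => (hρpos w hw).ne')
  have huc : ContDiffOn ℝ 2 (fun w => ((Real.log (ρ w) : ℂ))) Ω' :=
    Complex.ofRealCLM.contDiff.comp_contDiffOn hσ
  have hG1 : ContDiffOn ℝ 1 G Ω' := contDiffOn_wdz hΩ' huc (by norm_num)
  have hGd : DifferentiableAt ℝ G w0 :=
    ((hG1.differentiableOn one_ne_zero) w0 hw0).differentiableAt (hΩ'.mem_nhds hw0)
  -- nonvanishing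
  have hpq0 : ∀ z ∈ Ω, p z ≠ 0 ∧ q z ≠ 0 := by
    intro z hz
    have h1 := hOP z hz
    have h2 := hconst z hz
    have hpz : p z ≠ 0 := by
      intro h; rw [h] at h1; simp only [norm_zero] at h1
      exact (norm_nonneg (q z)).not_gt h1
    refine ⟨hpz, ?_⟩
    intro h; rw [h] at h2; simp only [zero_div, norm_zero] at h2
    exact hk0.ne h2
  -- constant distortion as a complex identity
  have hQconst : ∀ z ∈ Ω, q z * (starRingEnd ℂ) (q z) = ((k:ℝ) : ℂ)^2 * (p z * (starRingEnd ℂ) (p z)) := by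
    intro z hz
    have hpz := (hpq0 z hz).1
    have habs : ‖q z‖ = k * ‖p z‖ := by
      have h2 := hconst z hz
      rw [norm_div] at h2
      rw [div_eq_iff (by simpa using hpz)] at h2
      linarith [h2]
    have hre : Complex.normSq (q z) = k^2 * Complex.normSq (p z) := by
      rw [Complex.normSq_eq_norm_sq, Complex.normSq_eq_norm_sq, habs]; ring
    rw [Complex.mul_conj, Complex.mul_conj, hre]
    push_cast; ring
  -- tension equation
  have hT : ∀ z ∈ Ω, wdz q z = -(G (f z) * p z * q z) := by
    intro z hz
    have := hharm z hz
    linear_combination this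
  -- Schwarz for f
  have hS : ∀ z ∈ Ω, wdzbar p z = wdz q z :=
    fun z hz => (schwarz_wirt f z (hfC z hz)).symm
  have hPbar : ∀ z ∈ Ω, wdzbar p z = -(G (f z) * p z * q z) :=
    fun z hz => (hS z hz).trans (hT z hz)
  -- point values
  set s0 : ℂ := G w0 with hs0def
  set p0 : ℂ := p z0 with hp0def
  set q0 : ℂ := q z0 with hq0def
  set m0 : ℂ := wdz p z0 with hm0def
  set t0 : ℂ := wdzbar q z0 with ht0def
  set a0 : ℂ := wdz G w0 with ha0def
  set b0 : ℂ := wdzbar G w0 with hb0def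
  have hGfz : G (f z0) = s0 := by rw [hfz0]
  have hGd' : DifferentiableAt ℝ G (f z0) := by rw [hfz0]; exact hGd
  have hdGf : DifferentiableAt ℝ (fun z => G (f z)) z0 := hGd'.comp z0 (hdf z0 hz0)
  have hV3 : wdz (fun z => G (f z)) z0 = a0 * p0 + b0 * (starRingEnd ℂ) q0 := by
    have h := wdz_comp G f z0 (hdf z0 hz0) hGd'
    rw [hfz0] at h
    exact h
  have hV4 : wdzbar (fun z => G (f z)) z0 = a0 * q0 + b0 * (starRingEnd ℂ) p0 := by
    have h := wdzbar_comp G f z0 (hdf z0 hz0) hGd'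
    rw [hfz0] at h
    exact h
  have hevp : wdzbar p =ᶠ[nhds z0] fun z => -(G (f z) * p z * q z) := by
    filter_upwards [hmem] with z hz; exact hPbar z hz
  have hevq : wdz q =ᶠ[nhds z0] fun z => -(G (f z) * p z * q z) := by
    filter_upwards [hmem] with z hz; exact hT z hz
  set c1x : ℂ := -((a0*p0 + b0*(starRingEnd ℂ) q0) * p0 * q0 + s0 * m0 * q0
      + s0 * p0 * (-(s0*p0*q0))) with hc1xdef
  set c2x : ℂ := -((a0*q0 + b0*(starRingEnd ℂ) p0) * p0 * q0 + s0 * (-(s0*p0*q0)) * q0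
      + s0 * p0 * t0) with hc2xdef
  have hc1 : wdz (wdzbar p) z0 = c1x := by
    rw [wdz_congr hevp]
    have h1 := wdz_neg (fun z => G (f z) * p z * q z) z0
    rw [h1, wdz_mul3 _ _ _ z0 hdGf (hdp z0 hz0) (hdq z0 hz0), hV3, hT z0 hz0, hGfz,
      hc1xdef]
  have hc2 : wdzbar (wdz q) z0 = c2x := by
    rw [wdzbar_congr hevq]
    have h1 := wdzbar_neg (fun z => G (f z) * p z * q z) z0
    rw [h1, wdzbar_mul3 _ _ _ z0 hdGf (hdp z0 hz0) (hdq z0 hz0), hV4,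
      hPbar z0 hz0, hGfz, hc2xdef]
  have hschp : wdzbar (wdz p) z0 = wdz (wdzbar p) z0 := (schwarz_wirt p z0 (hpC z0 hz0)).symm
  have hschq : wdz (wdzbar q) z0 = wdzbar (wdz q) z0 := schwarz_wirt q z0 (hqC z0 hz0)
  -- P and Q auxiliary functions
  set Pf : ℂ → ℂ := fun z => p z * (starRingEnd ℂ) (p z) with hPfdef
  set Qf : ℂ → ℂ := fun z => q z * (starRingEnd ℂ) (q z) with hQfdef
  have hdCp : ∀ z ∈ Ω, DifferentiableAt ℝ (fun w => (starRingEnd ℂ) (p w)) z :=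
    fun z hz => Complex.conjCLE.differentiableAt.comp z (hdp z hz)
  have hdCq : ∀ z ∈ Ω, DifferentiableAt ℝ (fun w => (starRingEnd ℂ) (q w)) z :=
    fun z hz => Complex.conjCLE.differentiableAt.comp z (hdq z hz)
  have hdCpb : DifferentiableAt ℝ (fun w => (starRingEnd ℂ) (wdzbar p w)) z0 :=
    Complex.conjCLE.differentiableAt.comp z0 (hdpb z0 hz0)
  have hdCqb : DifferentiableAt ℝ (fun w => (starRingEnd ℂ) (wdzbar q w)) z0 :=
    Complex.conjCLE.differentiableAt.comp z0 (hdqb z0 hz0)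
  have hdPf : ∀ z ∈ Ω, DifferentiableAt ℝ Pf z := fun z hz => (hdp z hz).mul (hdCp z hz)
  have hPfC2 : ContDiffAt ℝ 2 Pf z0 := by
    have hcj : ContDiffAt ℝ 2 (fun w => (starRingEnd ℂ) (p w)) z0 :=
      (Complex.conjCLE.toContinuousLinearMap.contDiff.contDiffAt).comp z0 (hpC z0 hz0)
    exact (hpC z0 hz0).mul hcj
  -- expansions of wdz Pf, wdz Qf
  have hPev : wdz Pf =ᶠ[nhds z0]
      (fun z => wdz p z * (starRingEnd ℂ) (p z) + p z * (starRingEnd ℂ) (wdzbar p z)) := by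
    filter_upwards [hmem] with z hz
    rw [hPfdef]
    rw [wdz_mul p (fun w => (starRingEnd ℂ) (p w)) z (hdp z hz) (hdCp z hz),
      wdz_conj p z (hdp z hz)]
  have hQev : wdz Qf =ᶠ[nhds z0]
      (fun z => wdz q z * (starRingEnd ℂ) (q z) + q z * (starRingEnd ℂ) (wdzbar q z)) := by
    filter_upwards [hmem] with z hz
    rw [hQfdef]
    rw [wdz_mul q (fun w => (starRingEnd ℂ) (q w)) z (hdq z hz) (hdCq z hz),
      wdz_conj q z (hdq z hz)]
  -- second-order expansions at z0
  have hWPx : wdzbar (wdz Pf) z0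
      = c1x * (starRingEnd ℂ) p0 + m0 * (starRingEnd ℂ) m0
        + (-(s0*p0*q0)) * (starRingEnd ℂ) (-(s0*p0*q0)) + p0 * (starRingEnd ℂ) c1x := by
    rw [wdzbar_congr hPev]
    rw [wdzbar_add (fun z => wdz p z * (starRingEnd ℂ) (p z))
      (fun z => p z * (starRingEnd ℂ) (wdzbar p z)) z0
      ((hdpz z0 hz0).mul (hdCp z0 hz0)) ((hdp z0 hz0).mul hdCpb)]
    rw [wdzbar_mul (wdz p) (fun w => (starRingEnd ℂ) (p w)) z0 (hdpz z0 hz0) (hdCp z0 hz0)]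
    rw [wdzbar_mul p (fun w => (starRingEnd ℂ) (wdzbar p w)) z0 (hdp z0 hz0) hdCpb]
    rw [wdzbar_conj p z0 (hdp z0 hz0), wdzbar_conj (wdzbar p) z0 (hdpb z0 hz0)]
    rw [hschp, hc1, hPbar z0 hz0, hGfz]
    ring
  have hWQx : wdzbar (wdz Qf) z0
      = c2x * (starRingEnd ℂ) q0 + (-(s0*p0*q0)) * (starRingEnd ℂ) (-(s0*p0*q0))
        + t0 * (starRingEnd ℂ) t0 + q0 * (starRingEnd ℂ) c2x := by
    rw [wdzbar_congr hQev]
    rw [wdzbar_add (fun z => wdz q z * (starRingEnd ℂ) (q z))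
      (fun z => q z * (starRingEnd ℂ) (wdzbar q z)) z0
      ((hdqz z0 hz0).mul (hdCq z0 hz0)) ((hdq z0 hz0).mul hdCqb)]
    rw [wdzbar_mul (wdz q) (fun w => (starRingEnd ℂ) (q w)) z0 (hdqz z0 hz0) (hdCq z0 hz0)]
    rw [wdzbar_mul q (fun w => (starRingEnd ℂ) (wdzbar q w)) z0 (hdq z0 hz0) hdCqb]
    rw [wdzbar_conj q z0 (hdq z0 hz0), wdzbar_conj (wdzbar q) z0 (hdqb z0 hz0)]
    rw [hschq, hc2, hT z0 hz0, hGfz]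
    ring
  -- the constant-distortion relation between Pf and Qf derivatives
  have hev1 : wdz Qf =ᶠ[nhds z0] fun z => ((k:ℝ):ℂ)^2 * wdz Pf z := by
    filter_upwards [hmem] with z hz
    have h1 : Qf =ᶠ[nhds z] fun w => ((k:ℝ):ℂ)^2 * Pf w := by
      filter_upwards [hΩ.mem_nhds hz] with y hy
      exact hQconst y hy
    rw [wdz_congr h1, wdz_const_mul _ Pf z (hdPf z hz)]
  have hW : wdzbar (wdz Qf) z0 = ((k:ℝ):ℂ)^2 * wdzbar (wdz Pf) z0 := by
    rw [wdzbar_congr hev1, wdzbar_const_mul _ (wdz Pf) z0 (wdz_diffAt hPfC2)]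
  -- first order relation at z0
  have hfirst : wdz Qf z0 = ((k:ℝ):ℂ)^2 * wdz Pf z0 := hev1.self_of_nhds
  have hQproj : wdz Qf z0 = -(s0*p0*q0) * (starRingEnd ℂ) q0 + q0 * (starRingEnd ℂ) t0 := by
    have h := hQev.self_of_nhds
    simp only at h
    rw [h, hT z0 hz0, hGfz]
  have hPproj : wdz Pf z0 = m0 * (starRingEnd ℂ) p0 + p0 * (starRingEnd ℂ) (-(s0*p0*q0)) := by
    have h := hPev.self_of_nhds
    simp only at h
    rw [h, hPbar z0 hz0, hGfz]
  rw [hQproj, hPproj] at hfirst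
  rw [hWPx, hWQx] at hW
  -- prepare hypotheses of key_poly
  have conj_ne : ∀ x : ℂ, x ≠ 0 → (starRingEnd ℂ) x ≠ 0 := by
    intro x hx h
    exact hx (by simpa using congrArg (starRingEnd ℂ) h)
  have hp0 : p0 ≠ 0 := (hpq0 z0 hz0).1
  have hq0 : q0 ≠ 0 := (hpq0 z0 hz0).2
  have hkC : ((k:ℝ):ℂ) ≠ 0 := by exact_mod_cast hk0.ne'
  have hk2C : ((k:ℝ):ℂ)^2 ≠ 1 := by
    intro h
    have h2 : (k:ℝ)^2 = 1 := by exact_mod_cast h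
    nlinarith
  have h1 : q0 * (starRingEnd ℂ) q0 = ((k:ℝ):ℂ)^2 * (p0 * (starRingEnd ℂ) p0) :=
    hQconst z0 hz0
  simp only [map_neg, map_mul, map_add, map_pow, Complex.conj_conj, Complex.conj_ofReal]
    at hfirst hW
  have h2 : -(s0*p0*q0) * (starRingEnd ℂ) q0 + q0 * (starRingEnd ℂ) t0
      = ((k:ℝ):ℂ)^2 * (m0 * (starRingEnd ℂ) p0
        + p0 * (-((starRingEnd ℂ) s0 * (starRingEnd ℂ) p0 * (starRingEnd ℂ) q0))) := by
    linear_combination hfirst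
  have h2' : -((starRingEnd ℂ) s0 * (starRingEnd ℂ) p0 * (starRingEnd ℂ) q0) * q0
      + (starRingEnd ℂ) q0 * t0
      = ((k:ℝ):ℂ)^2 * ((starRingEnd ℂ) m0 * p0 + (starRingEnd ℂ) p0 * (-(s0*p0*q0))) := by
    have hc := congrArg (starRingEnd ℂ) h2
    simp only [map_add, map_mul, map_neg, map_pow, Complex.conj_conj, Complex.conj_ofReal] at hc
    linear_combination hc
  have h3 : (-((a0*q0 + b0*(starRingEnd ℂ) p0)*p0*q0 - s0*(s0*p0*q0)*q0 + s0*p0*t0))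
        * (starRingEnd ℂ) q0
      + (s0*p0*q0)*((starRingEnd ℂ) s0*(starRingEnd ℂ) p0*(starRingEnd ℂ) q0)
      + t0 * (starRingEnd ℂ) t0
      + q0*(-(((starRingEnd ℂ) a0*(starRingEnd ℂ) q0 + (starRingEnd ℂ) b0*p0)
          *(starRingEnd ℂ) p0*(starRingEnd ℂ) q0
        - (starRingEnd ℂ) s0*((starRingEnd ℂ) s0*(starRingEnd ℂ) p0*(starRingEnd ℂ) q0)
          *(starRingEnd ℂ) q0
        + (starRingEnd ℂ) s0*(starRingEnd ℂ) p0*(starRingEnd ℂ) t0))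
      = ((k:ℝ):ℂ)^2*((-((a0*p0 + b0*(starRingEnd ℂ) q0)*p0*q0 + s0*m0*q0
          - s0*p0*(s0*p0*q0)))*(starRingEnd ℂ) p0
        + m0*(starRingEnd ℂ) m0
        + (s0*p0*q0)*((starRingEnd ℂ) s0*(starRingEnd ℂ) p0*(starRingEnd ℂ) q0)
        + p0*(-(((starRingEnd ℂ) a0*(starRingEnd ℂ) p0 + (starRingEnd ℂ) b0*q0)
            *(starRingEnd ℂ) p0*(starRingEnd ℂ) q0
          + (starRingEnd ℂ) s0*(starRingEnd ℂ) m0*(starRingEnd ℂ) q0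
          - (starRingEnd ℂ) s0*(starRingEnd ℂ) p0
            *((starRingEnd ℂ) s0*(starRingEnd ℂ) p0*(starRingEnd ℂ) q0)))) := by
    rw [hc1xdef, hc2xdef] at hW
    simp only [map_neg, map_mul, map_add, Complex.conj_conj] at hW
    linear_combination hW
  have hbb : b0 + (starRingEnd ℂ) b0 = 0 :=
    key_poly p0 ((starRingEnd ℂ) p0) q0 ((starRingEnd ℂ) q0) s0 ((starRingEnd ℂ) s0)
      a0 ((starRingEnd ℂ) a0) b0 ((starRingEnd ℂ) b0) m0 ((starRingEnd ℂ) m0)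
      t0 ((starRingEnd ℂ) t0) k hp0 (conj_ne p0 hp0) hq0 (conj_ne q0 hq0) hkC hk2C
      h1 h2 h2' h3
  -- conclude via the Laplacian link
  have hlap := lap_link hΩ' hw0 hσ
  have hb0eq : b0 = wdzbar (wdz (fun w => ((Real.log (ρ w) : ℂ)))) w0 := rfl
  rw [← hb0eq] at hlap
  rw [hbb] at hlap
  have hzero := hlap.symm
  rw [div_eq_zero_iff] at hzero
  have hzero' := hzero.resolve_right (by norm_num)
  exact_mod_cast hzero'
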